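/- Let A : Matrix (Fin (n+n')) (Fin (n+n')) ℝ be positive definite, let A1 be the principal submatrix of A on the first n indices and A2 the principal submatrix on the last n' indices, and let D = fromBlocks A1 0 0 A2 be the block-diagonal part of A (with n, n' ≥ 1). Then D is positive definite, every eigenvalue of D lies in the interval [λmin(A), λmax(A)], and consequently the spectral condition number of D is bounded by that of A: λmax(D)/λmin(D) ≤ λmax(A)/λmin(A). -/

import Mathlib

/-!
In the Loewner order a Hermitian matrix satisfies `λmin(A) • 1 ≤ A ≤ λmax(A) • 1`, and these
scalar bounds are equivalent to bounds on all of its eigenvalues. Passing to a principal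
submatrix and assembling a block-diagonal matrix both preserve the Loewner order, so
`D = fromBlocks A1 0 0 A2` satisfies the same bounds, i.e. its eigenvalues lie in
`[λmin(A), λmax(A)]`. As `λmin(A) > 0`, `D` is positive definite and its condition number is
at most that of `A`.
-/

open Matrix
open scoped MatrixOrder ComplexOrder

namespace Matrix

theorem PosSemidef.fromBlocks_zero {m n R : Type*} [Fintype m] [Fintype n]
    [CommRing R] [PartialOrder R] [StarRing R] [IsOrderedAddMonoid R]
    {A : Matrix m m R} {D : Matrix n n R}
    (hA : A.PosSemidef) (hD : D.PosSemidef) : (fromBlocks A 0 0 D).PosSemidef := by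
  rw [posSemidef_iff_dotProduct_mulVec] at hA hD ⊢
  refine ⟨hA.1.fromBlocks (by simp) hD.1, fun x => ?_⟩
  have := add_nonneg (hA.2 (x ∘ Sum.inl)) (hD.2 (x ∘ Sum.inr))
  simpa only [fromBlocks_mulVec, dotProduct, Fintype.sum_sum_type, zero_mulVec, add_zero,
    zero_add, Sum.elim_inl, Sum.elim_inr, Pi.star_apply, Function.comp_apply] using this

section LoewnerOrder

variable {𝕜 : Type*} [RCLike 𝕜] {m n p : Type*}

theorem submatrix_mono {A B : Matrix n n 𝕜} (h : A ≤ B) (f : m → n) :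
    A.submatrix f f ≤ B.submatrix f f :=
  PosSemidef.submatrix h f

theorem fromBlocks_zero_mono [Fintype m] [Fintype n] {A A' : Matrix m m 𝕜}
    {D D' : Matrix n n 𝕜} (hA : A ≤ A') (hD : D ≤ D') :
    fromBlocks A 0 0 D ≤ fromBlocks A' 0 0 D' := by
  have hsub : fromBlocks A' 0 0 D' - fromBlocks A 0 0 D = fromBlocks (A' - A) 0 0 (D' - D) := by
    simp [sub_eq_add_neg, fromBlocks_neg, fromBlocks_add]
  rw [le_iff, hsub]
  exact hA.fromBlocks_zero hD

variable [DecidableEq m] [DecidableEq n] [DecidableEq p]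

theorem smul_one_submatrix {f : m → n} (hf : Function.Injective f) (c : ℝ) :
    (c • 1 : Matrix n n 𝕜).submatrix f f = c • 1 := by
  ext i j
  simp [one_apply, hf.eq_iff]

theorem smul_one_le_fromBlocks_submatrix [Fintype m] [Fintype p] {A : Matrix n n 𝕜}
    {f : m → n} {g : p → n} (hf : Function.Injective f) (hg : Function.Injective g)
    {c : ℝ} (hc : c • 1 ≤ A) :
    c • 1 ≤ fromBlocks (A.submatrix f f) 0 0 (A.submatrix g g) := by
  rw [← fromBlocks_one, fromBlocks_smul, smul_zero, smul_zero, ← smul_one_submatrix hf c,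
    ← smul_one_submatrix hg c]
  exact fromBlocks_zero_mono (submatrix_mono hc f) (submatrix_mono hc g)

theorem fromBlocks_submatrix_le_smul_one [Fintype m] [Fintype p] {A : Matrix n n 𝕜}
    {f : m → n} {g : p → n} (hf : Function.Injective f) (hg : Function.Injective g)
    {d : ℝ} (hd : A ≤ d • 1) :
    fromBlocks (A.submatrix f f) 0 0 (A.submatrix g g) ≤ d • 1 := by
  rw [← fromBlocks_one, fromBlocks_smul, smul_zero, smul_zero, ← smul_one_submatrix hf d,
    ← smul_one_submatrix hg d]
  exact fromBlocks_zero_mono (submatrix_mono hd f) (submatrix_mono hd g)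

end LoewnerOrder

section Eigenvalues

variable {𝕜 : Type*} [RCLike 𝕜] {n : Type*} [Fintype n] [DecidableEq n] {A : Matrix n n 𝕜}

theorem IsHermitian.smul_one_le_iff (hA : A.IsHermitian) {c : ℝ} :
    c • 1 ≤ A ↔ ∀ i, c ≤ hA.eigenvalues i := by
  rw [← Algebra.algebraMap_eq_smul_one, algebraMap_le_iff_le_spectrum hA.isSelfAdjoint,
    hA.spectrum_real_eq_range_eigenvalues, Set.forall_mem_range]

theorem IsHermitian.le_smul_one_iff (hA : A.IsHermitian) {c : ℝ} :
    A ≤ c • 1 ↔ ∀ i, hA.eigenvalues i ≤ c := by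
  rw [← Algebra.algebraMap_eq_smul_one, le_algebraMap_iff_spectrum_le hA.isSelfAdjoint,
    hA.spectrum_real_eq_range_eigenvalues, Set.forall_mem_range]

theorem IsHermitian.iInf_eigenvalues_smul_one_le (hA : A.IsHermitian) :
    (⨅ i, hA.eigenvalues i) • 1 ≤ A :=
  hA.smul_one_le_iff.2 (ciInf_le (Finite.bddBelow_range _))

theorem IsHermitian.le_iSup_eigenvalues_smul_one (hA : A.IsHermitian) :
    A ≤ (⨆ i, hA.eigenvalues i) • 1 :=
  hA.le_smul_one_iff.2 (le_ciSup (Finite.bddAbove_range _))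

theorem PosDef.iInf_eigenvalues_pos [Nonempty n] (hA : A.PosDef) :
    0 < ⨅ i, hA.1.eigenvalues i := by
  obtain ⟨i, hi⟩ := exists_eq_ciInf_of_finite (f := hA.1.eigenvalues)
  exact hi ▸ hA.eigenvalues_pos i

end Eigenvalues

end Matrix

theorem stmt_6 {n n' : ℕ}
    (A : Matrix (Fin ((n + 1) + (n' + 1))) (Fin ((n + 1) + (n' + 1))) ℝ)
    (hA : A.PosDef)
    (A1 : Matrix (Fin (n + 1)) (Fin (n + 1)) ℝ)
    (hA1 : A1 = A.submatrix (Fin.castAdd (n' + 1)) (Fin.castAdd (n' + 1)))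
    (A2 : Matrix (Fin (n' + 1)) (Fin (n' + 1)) ℝ)
    (hA2 : A2 = A.submatrix (Fin.natAdd (n + 1)) (Fin.natAdd (n + 1)))
    (hD : (Matrix.fromBlocks A1 0 0 A2).IsHermitian) :
    (Matrix.fromBlocks A1 0 0 A2).PosDef ∧
      (∀ i, (⨅ j, hA.1.eigenvalues j) ≤ hD.eigenvalues i ∧
        hD.eigenvalues i ≤ ⨆ j, hA.1.eigenvalues j) ∧
      (⨆ i, hD.eigenvalues i) / (⨅ i, hD.eigenvalues i) ≤
        (⨆ j, hA.1.eigenvalues j) / (⨅ j, hA.1.eigenvalues j) := by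
  subst hA1 hA2
  have hf := Fin.castAdd_injective (n + 1) (n' + 1)
  have hg := Fin.natAdd_injective (n' + 1) (n + 1)
  have hbounds : ∀ i, (⨅ j, hA.1.eigenvalues j) ≤ hD.eigenvalues i ∧
      hD.eigenvalues i ≤ ⨆ j, hA.1.eigenvalues j := fun i =>
    ⟨hD.smul_one_le_iff.1 (smul_one_le_fromBlocks_submatrix hf hg
        hA.1.iInf_eigenvalues_smul_one_le) i,
      hD.le_smul_one_iff.1 (fromBlocks_submatrix_le_smul_one hf hg
        hA.1.le_iSup_eigenvalues_smul_one) i⟩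
  have hmin : 0 < ⨅ j, hA.1.eigenvalues j := hA.iInf_eigenvalues_pos
  refine ⟨hD.posDef_iff_eigenvalues_pos.2 fun i => hmin.trans_le (hbounds i).1, hbounds, ?_⟩
  have hsup : (⨆ i, hD.eigenvalues i) ≤ ⨆ j, hA.1.eigenvalues j := ciSup_le fun i => (hbounds i).2
  have hinf : (⨅ j, hA.1.eigenvalues j) ≤ ⨅ i, hD.eigenvalues i := le_ciInf fun i => (hbounds i).1
  have hmax : 0 ≤ ⨆ j, hA.1.eigenvalues j :=
    hmin.le.trans (ciInf_le_ciSup (Finite.bddBelow_range _) (Finite.bddAbove_range _))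
  exact div_le_div₀ hmax hsup hmin hinf
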